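/- Let κ be a regular uncountable cardinal and ⟨C_α | α < κ⟩ be a ⊠⁻(κ)-sequence. Then for every stationary Γ ⊆ κ, every cardinal σ < sup(Reg(κ)), and every pairwise disjoint family ℬ ⊆ [κ]^σ of size κ, there exist δ ∈ Γ and an ordinal η < δ such that for κ-many b ∈ ℬ, for every β ∈ b, λ(δ,β) = η and ρ₂(δ,β) = η_{δ,β} (where λ, ρ₂ come from walking along the C-sequence, and η_{δ,β} := min{n < ω | η ∈ C_{Tr(δ,β)(n)} or n = ρ₂(δ,β)} + 1). In particular χ₂(⟨C_α⟩, κ) = sup(Reg(κ)). -/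

import Mathlib

open Cardinal Ordinal Set

noncomputable section

/-- The order type of a set of ordinals. -/
def otp (s : Set Ordinal) : Ordinal := Ordinal.type ((· < ·) : s → s → Prop)

/-- `a < b` for sets of ordinals: every element of `a` is below every element of `b`. -/
def SetLT (a b : Set Ordinal.{0}) : Prop := ∀ α ∈ a, ∀ β ∈ b, α < β

/-- `A` is a pairwise disjoint subfamily of `[κ]^σ`:
a family of subsets of (ordinals below) `κ` of order type `σ`, pairwise disjoint. -/
def IsFamily (κ σ : Ordinal.{0}) (A : Set (Set Ordinal)) : Prop :=
  (∀ a ∈ A, a ⊆ Set.Iio κ ∧ otp a = Ordinal.lift.{1} σ) ∧ A.PairwiseDisjoint id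

/-- Shelah's principle `Pr₁(κ, κ, θ, χ)`. -/
def Pr1 (κ θ χ : Cardinal.{0}) : Prop :=
  ∃ c : Ordinal → Ordinal → Ordinal,
    (∀ α β : Ordinal, α < β → β < κ.ord → c α β < θ.ord) ∧
    ∀ σ : Ordinal, σ < χ.ord → ∀ A : Set (Set Ordinal),
      IsFamily κ.ord σ A → #A = Cardinal.lift.{1} κ →
      ∀ τ : Ordinal, τ < θ.ord →
        ∃ a ∈ A, ∃ b ∈ A, SetLT a b ∧ ∀ α ∈ a, ∀ β ∈ b, c α β = τ
/-- `D` is a club (closed unbounded set) in `κ`. -/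
def ClubIn (D : Set Ordinal.{0}) (κ : Ordinal.{0}) : Prop :=
  D ⊆ Set.Iio κ ∧ (∀ α < κ, ∃ β ∈ D, α ≤ β) ∧
    ∀ δ < κ, 0 < δ → (∀ γ < δ, ∃ x ∈ D, γ < x ∧ x < δ) → δ ∈ D

/-- `S` is a stationary subset of `κ`. -/
def StatIn (S : Set Ordinal.{0}) (κ : Ordinal.{0}) : Prop :=
  S ⊆ Set.Iio κ ∧ ∀ D : Set Ordinal, ClubIn D κ → (S ∩ D).Nonempty

/-- `δ` is an accumulation point belonging to `s`, i.e. `δ ∈ acc(s)`: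
`δ ∈ s` and `sup(s ∩ δ) = δ > 0`. -/
def IsAccOf (s : Set Ordinal.{0}) (δ : Ordinal.{0}) : Prop :=
  δ ∈ s ∧ 0 < δ ∧ ∀ γ < δ, ∃ x ∈ s, γ < x ∧ x < δ

/-- `C` is a C-sequence over `κ`: each `C α` is a closed subset of `α`
with `sup (C α) = sup α`. -/
def IsCSeq (κ : Ordinal.{0}) (C : Ordinal.{0} → Set Ordinal.{0}) : Prop :=
  (∀ α < κ, C α ⊆ Set.Iio α) ∧
  (∀ α < κ, ∀ δ, 0 < δ → δ < α → (∀ γ < δ, ∃ x ∈ C α, γ < x ∧ x < δ) → δ ∈ C α) ∧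
  (∀ α < κ, ∀ γ : Ordinal, (∀ x ∈ C α, x ≤ γ) → ∀ δ < α, δ ≤ γ)

/-- The upper trace of the walk from `β` down to `α` along the C-sequence `C`. -/
def Tr (C : Ordinal.{0} → Set Ordinal.{0}) (α β : Ordinal.{0}) : ℕ → Ordinal.{0}
  | 0 => β
  | n + 1 => if α < Tr C α β n then sInf (C (Tr C α β n) ∩ Set.Ici α) else α

/-- The length `ρ₂(α,β)` of the walk from `β` down to `α`. -/
def rho2 (C : Ordinal.{0} → Set Ordinal.{0}) (α β : Ordinal.{0}) : ℕ :=
  sInf {n | Tr C α β n = α}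

/-- The (finite) trace `tr(α,β)` of the walk, as a list. -/
def trL (C : Ordinal.{0} → Set Ordinal.{0}) (α β : Ordinal.{0}) : List Ordinal.{0} :=
  (List.range (rho2 C α β)).map (Tr C α β)

/-- `λ(α,β) = max_{i<ρ₂(α,β)} sup (C_{Tr(α,β)(i)} ∩ α)`. -/
def lamb (C : Ordinal.{0} → Set Ordinal.{0}) (α β : Ordinal.{0}) : Ordinal.{0} :=
  (Finset.range (rho2 C α β)).sup fun i => sSup (C (Tr C α β i) ∩ Set.Iio α)

/-- `η_{α,β} := min { n < ω ∣ η ∈ C_{Tr(α,β)(n)} or n = ρ₂(α,β) } + 1`. -/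
def etaIdx (C : Ordinal.{0} → Set Ordinal.{0}) (η α β : Ordinal.{0}) : ℕ :=
  sInf {n | η ∈ C (Tr C α β n) ∨ n = rho2 C α β} + 1

/-- The transformation principle `Pℓ₁(κ, θ, χ)`. -/
def Pl1 (κ θ χ : Cardinal.{0}) : Prop :=
  ∃ t : Ordinal.{0} → Ordinal.{0} → Ordinal.{0} × Ordinal.{0} × Ordinal.{0},
    (∀ α β : Ordinal, α < β → β < κ.ord →
      (t α β).1 ≤ (t α β).2.1 ∧ (t α β).2.1 ≤ α ∧ α < (t α β).2.2 ∧ (t α β).2.2 ≤ β) ∧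
    ∀ σ : Ordinal, σ < χ.ord → ∀ A : Set (Set Ordinal),
      IsFamily κ.ord σ A → #A = Cardinal.lift.{1} κ →
      ∃ S : Set Ordinal, StatIn S κ.ord ∧
        ∀ αs ∈ S, ∀ βs ∈ S, αs < βs →
          ∀ τ : Ordinal, τ < θ.ord → τ < αs →
            ∃ a ∈ A, ∃ b ∈ A, SetLT a b ∧
              ∀ α ∈ a, ∀ β ∈ b, t α β = (τ, αs, βs)

/-- The transformation principle `Pℓ₂(κ, Γ, χ)`. -/
def Pl2 (κ : Cardinal.{0}) (Γ : Set Ordinal.{0}) (χ : Cardinal.{0}) : Prop :=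
  ∃ t : Ordinal.{0} → Ordinal.{0} → Ordinal.{0} × Ordinal.{0},
    (∀ α β : Ordinal, α < β → β < κ.ord →
      (t α β).1 ≤ α ∧ α < (t α β).2 ∧ (t α β).2 ≤ β) ∧
    ∀ σ : Ordinal, σ < χ.ord → ∀ A : Set (Set Ordinal),
      IsFamily κ.ord σ A → #A = Cardinal.lift.{1} κ →
      ∃ D : Set Ordinal, ClubIn D κ.ord ∧
        ∀ αs ∈ Γ ∩ D, ∀ βs ∈ Γ ∩ D, αs < βs →
          ∃ a ∈ A, ∃ b ∈ A, SetLT a b ∧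
            ∀ α ∈ a, ∀ β ∈ b, t α β = (αs, βs)

/-- The principle `Pr₁⁺(κ, θ, χ)`. -/
def Pr1plus (κ θ χ : Cardinal.{0}) : Prop :=
  ∃ o : Ordinal.{0} → Ordinal.{0} → Ordinal.{0},
    (∀ α β : Ordinal, 0 < α → α < β → β < κ.ord → o α β < α ∧ o α β < θ.ord) ∧
    ∀ ζ : Ordinal, ζ < θ.ord → ∀ σ : Ordinal, σ < χ.ord →
      ∀ A : Set (Set Ordinal), IsFamily κ.ord σ A → #A = Cardinal.lift.{1} κ →
        ∃ γ < κ.ord, ∀ b : Set Ordinal,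
          b ⊆ Set.Iio κ.ord → b ⊆ Set.Ici γ → otp b = Ordinal.lift.{1} σ →
          ∃ a ∈ A, a ⊆ Set.Iio γ ∧ ∀ α ∈ a, ∀ β ∈ b, o α β = ζ

/-- The oscillation principle `Pℓ₆(κ, χ)`. -/
def Pl6 (κ χ : Cardinal.{0}) : Prop :=
  ∃ d : List Ordinal.{0} → ℕ,
    ∀ (u v : Ordinal.{0} → Set (List Ordinal.{0}))
      (s : Ordinal.{0} → List Ordinal.{0}) (φ : Ordinal.{0} → Ordinal.{0}),
      (∃ ε < κ.ord, ∀ α : Ordinal, ε ≤ α → α < κ.ord → φ α < α) →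
      (∀ α < κ.ord, (u α).Nonempty ∧ #(u α) < Cardinal.lift.{1} χ ∧
        ∀ ϱ ∈ u α, (∀ x ∈ ϱ, x < κ.ord) ∧ α ∈ ϱ) →
      (∀ α < κ.ord, (v α).Nonempty ∧ #(v α) < Cardinal.lift.{1} χ ∧
        ∀ σl ∈ v α, (∀ x ∈ σl, x < κ.ord) ∧ (s α ++ [α]) <+: σl) →
      ∃ α β : Ordinal, α < β ∧ β < κ.ord ∧ φ α = φ β ∧
        ∀ ϱ ∈ u α, ∀ σl ∈ v β, d (ϱ ++ σl) = ϱ.length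

/-- Shelah's principle `Pr₆(κ, κ, θ, χ)`. -/
def Pr6 (κ θ χ : Cardinal.{0}) : Prop :=
  ∃ d : List Ordinal.{0} → Ordinal.{0},
    (∀ l, d l < θ.ord) ∧
    ∀ τ : Ordinal, τ < θ.ord → ∀ E : Set Ordinal, ClubIn E κ.ord →
      ∀ u v : Ordinal.{0} → Set (List Ordinal.{0}),
        (∀ α ∈ E, (u α).Nonempty ∧ #(u α) < Cardinal.lift.{1} χ ∧
          ∀ ϱ ∈ u α, (∀ x ∈ ϱ, x < κ.ord) ∧ α ∈ ϱ) →
        (∀ α ∈ E, (v α).Nonempty ∧ #(v α) < Cardinal.lift.{1} χ ∧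
          ∀ σl ∈ v α, (∀ x ∈ σl, x < κ.ord) ∧ α ∈ σl) →
        ∃ α ∈ E, ∃ β ∈ E, α < β ∧
          ∀ ϱ ∈ u α, ∀ σl ∈ v β, d (ϱ ++ σl) = τ

/-- The square principle `□(κ)`. -/
def SquarePrin (κ : Ordinal.{0}) : Prop :=
  ∃ C : Ordinal.{0} → Set Ordinal.{0},
    (∀ α < κ, C α ⊆ Set.Iio α) ∧
    (∀ α < κ, Order.IsSuccLimit α →
      (∀ γ < α, ∃ x ∈ C α, γ < x) ∧
      (∀ δ < α, 0 < δ → (∀ γ < δ, ∃ x ∈ C α, γ < x ∧ x < δ) → δ ∈ C α)) ∧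
    (∀ α < κ, ∀ δ, IsAccOf (C α) δ → C α ∩ Set.Iio δ = C δ) ∧
    ¬ ∃ D : Set Ordinal, ClubIn D κ ∧ ∀ δ, IsAccOf D δ → D ∩ Set.Iio δ = C δ

/-- The stick principle `⫯(κ)` (with witnesses of size `μ`). -/
def Stick (κ μ : Cardinal.{0}) : Prop :=
  ∃ X : Ordinal.{0} → Set Ordinal.{0},
    (∀ γ < κ.ord, X γ ⊆ Set.Iio κ.ord) ∧
    ∀ Y : Set Ordinal, Y ⊆ Set.Iio κ.ord → #Y = Cardinal.lift.{1} κ →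
      ∃ γ < κ.ord, X γ ⊆ Y ∧ #(X γ) = Cardinal.lift.{1} μ

/-- A filter is `λ`-complete: it is closed under intersections of fewer than `λ` sets. -/
def FilterComplete (lam : Cardinal.{0}) {α : Type 1} (F : Filter α) : Prop :=
  ∀ ι : Type 1, #ι < Cardinal.lift.{1} lam →
    ∀ f : ι → Set α, (∀ i, f i ∈ F) → (⋂ i, f i) ∈ F

/-- `lam` is a strongly compact cardinal: every `lam`-complete (proper) filter
extends to a `lam`-complete ultrafilter. -/
def IsStronglyCompact (lam : Cardinal.{0}) : Prop :=
  ∀ (α : Type 1) (F : Filter α), F.NeBot → FilterComplete lam F →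
    ∃ U : Ultrafilter α, (↑U : Filter α) ≤ F ∧ FilterComplete lam (↑U : Filter α)

/-- `last(α,β)`: `α` if `λ(α,β) < α`, and otherwise `min(im(tr(α,β)))`. -/
def lastStep (C : Ordinal.{0} → Set Ordinal.{0}) (α β : Ordinal.{0}) : Ordinal.{0} :=
  if lamb C α β < α then α else sInf {x | ∃ i < rho2 C α β, Tr C α β i = x}


/-!
Fix a regular `ν < κ` above `σ`. The ordinals `α` with `sup (nacc C_α ∩ Γ) = α` are unbounded
in `κ` by the hitting property; let `x` be the supremum of the first `ν` of them. By
disjointness κ-many blocks lie above `x`, and as `cf x = ν > σ` the values `λ*(x,β)` on each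
block (`λ` of the walk to `x`, ignoring the steps at which `x` is an accumulation point) are
bounded below `x`; by pigeonhole κ-many blocks share a bound `ζ`, and some such `α` lies in
`(ζ, x)`. Taking `δ ∈ nacc C_α ∩ Γ` high enough and `η = sup (C_α ∩ δ)`, the walk from `α` to `δ`
is a single step with `λ = η` and `ρ₂ = η_{δ,α} = 1`. Whenever `λ*(x,β) < η`, the walk from `β`
to `δ` runs along the walk to `x` and then, by coherence, continues as the walk from `x`; this
carries the pattern from `α` to `x`, and from `x` to every `β` in the κ-many blocks.
-/

section Walks

variable {κ : Ordinal.{0}} {C : Ordinal.{0} → Set Ordinal.{0}} {α β η δ x : Ordinal.{0}}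

lemma le_sSup_inter_Iio {s : Set Ordinal.{0}} {t a : Ordinal.{0}} (hs : t ∈ s) (ha : t < a) :
    t ≤ sSup (s ∩ Iio a) :=
  le_csSup ⟨a, fun _ h => h.2.le⟩ ⟨hs, ha⟩

lemma sSup_inter_Iio_le (s : Set Ordinal.{0}) (a : Ordinal.{0}) : sSup (s ∩ Iio a) ≤ a :=
  csSup_le' fun _ h => h.2.le

lemma IsCSeq.sSup_mem (hC : IsCSeq κ C) (hα : α < κ) {s : Set Ordinal.{0}} (hsC : s ⊆ C α)
    (hne : s.Nonempty) (hbdd : BddAbove s) (hlt : sSup s < α) : sSup s ∈ C α := by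
  by_cases hmem : sSup s ∈ s
  · exact hsC hmem
  have hlim : ∀ γ < sSup s, ∃ t ∈ C α, γ < t ∧ t < sSup s := fun γ hγ => by
    obtain ⟨t, ht, hγt⟩ := exists_lt_of_lt_csSup' hγ
    exact ⟨t, hsC ht, hγt, (le_csSup hbdd ht).lt_of_ne fun h => hmem (h ▸ ht)⟩
  obtain ⟨t, ht⟩ := hne
  have hpos : 0 < sSup s :=
    zero_le.trans_lt ((le_csSup hbdd ht).lt_of_ne fun h => hmem (h ▸ ht))
  exact hC.2.1 α hα _ hpos hlt hlim


lemma IsCSeq.inter_Ici_nonempty (hC : IsCSeq κ C) (hβ : β < κ) (h0 : 0 < α) (hαβ : α < β) :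
    (C β ∩ Ici α).Nonempty := by
  by_contra hempty
  have hlt : ∀ t ∈ C β, t < α := fun t ht => not_le.1 fun h => hempty ⟨t, ht, h⟩
  have hbdd : BddAbove (C β) := ⟨α, fun t ht => (hlt t ht).le⟩
  have hsup : α ≤ sSup (C β) := hC.2.2 β hβ _ (fun t ht => le_csSup hbdd ht) α hαβ
  have hlim : ∀ γ < α, ∃ t ∈ C β, γ < t ∧ t < α := fun γ hγ => by
    obtain ⟨t, ht, hγt⟩ := exists_lt_of_lt_csSup' (hγ.trans_le hsup)
    exact ⟨t, ht, hγt, hlt t ht⟩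
  exact (hlt α (hC.2.1 β hβ α h0 hαβ hlim)).false

lemma IsCSeq.isAccOf_of_sSup_inter_Iio_eq (hC : IsCSeq κ C) (hβ : β < κ) (h0 : 0 < α)
    (hαβ : α < β) (h : sSup (C β ∩ Iio α) = α) : IsAccOf (C β) α := by
  have hlim : ∀ γ < α, ∃ t ∈ C β, γ < t ∧ t < α := fun γ hγ => by
    obtain ⟨t, ht, hγt⟩ := exists_lt_of_lt_csSup' (hγ.trans_eq h.symm)
    exact ⟨t, ht.1, hγt, ht.2⟩
  exact ⟨hC.2.1 β hβ α h0 hαβ hlim, h0, hlim⟩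

lemma tr_one_of_lt (h : α < β) : Tr C α β 1 = sInf (C β ∩ Ici α) := by
  simp [Tr, h]

lemma tr_succ (n : ℕ) : Tr C α β (n + 1) = Tr C α (Tr C α β 1) n := by
  induction n with
  | zero => rfl
  | succ n ih => rw [Tr, ih, ← Tr]

lemma IsCSeq.tr_one_mem (hC : IsCSeq κ C) (hβ : β < κ) (h0 : 0 < α) (hαβ : α < β) :
    Tr C α β 1 ∈ C β ∩ Ici α :=
  tr_one_of_lt hαβ ▸ csInf_mem (hC.inter_Ici_nonempty hβ h0 hαβ)

lemma IsCSeq.tr_one_lt (hC : IsCSeq κ C) (hβ : β < κ) (h0 : 0 < α) (hαβ : α < β) :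
    Tr C α β 1 < β :=
  hC.1 β hβ (hC.tr_one_mem hβ h0 hαβ).1

lemma IsCSeq.exists_tr_eq (hC : IsCSeq κ C) (h0 : 0 < α) (hβ : β < κ) (hαβ : α ≤ β) :
    ∃ n, Tr C α β n = α := by
  induction β using WellFoundedLT.induction with
  | _ β ih =>
    rcases hαβ.eq_or_lt with rfl | hαβ
    · exact ⟨0, rfl⟩
    have hone := hC.tr_one_lt hβ h0 hαβ
    obtain ⟨n, hn⟩ := ih _ hone (hone.trans hβ) (hC.tr_one_mem hβ h0 hαβ).2
    exact ⟨n + 1, (tr_succ n).trans hn⟩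

lemma rho2_self : rho2 C α α = 0 :=
  Nat.sInf_eq_zero.2 (Or.inl rfl)

lemma IsCSeq.rho2_eq_succ (hC : IsCSeq κ C) (hβ : β < κ) (h0 : 0 < α) (hαβ : α < β) :
    rho2 C α β = rho2 C α (Tr C α β 1) + 1 := by
  have hpos : 1 ≤ rho2 C α β := by
    refine Nat.one_le_iff_ne_zero.2 fun h => ?_
    rcases Nat.sInf_eq_zero.1 h with h | h
    · exact hαβ.ne' h
    · obtain ⟨n, hn⟩ := hC.exists_tr_eq h0 hβ hαβ.le
      exact h.subset hn
  rw [rho2, ← Nat.sInf_add hpos]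
  congr 2
  ext m
  rw [Set.mem_ofPred_eq, tr_succ]
  rfl

lemma IsCSeq.finsetSup_range_rho2_eq (hC : IsCSeq κ C) (hβ : β < κ) (h0 : 0 < α) (hαβ : α < β)
    (f : Ordinal.{0} → Ordinal.{0}) :
    (Finset.range (rho2 C α β)).sup (fun i => f (Tr C α β i)) =
      f β ⊔ (Finset.range (rho2 C α (Tr C α β 1))).sup (fun i => f (Tr C α (Tr C α β 1) i)) := by
  rw [hC.rho2_eq_succ hβ h0 hαβ, Finset.range_add_one', Finset.sup_insert, Finset.sup_map]
  congr 1
  exact Finset.sup_congr rfl fun m _ => congrArg f (tr_succ m)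


lemma IsCSeq.lamb_eq_sup (hC : IsCSeq κ C) (hβ : β < κ) (h0 : 0 < α) (hαβ : α < β) :
    lamb C α β = sSup (C β ∩ Iio α) ⊔ lamb C α (Tr C α β 1) :=
  hC.finsetSup_range_rho2_eq hβ h0 hαβ fun ξ => sSup (C ξ ∩ Iio α)

lemma etaIdx_of_mem (h : η ∈ C β) : etaIdx C η α β = 1 := by
  rw [etaIdx, Nat.sInf_eq_zero.2 (Or.inl (Or.inl h))]

lemma IsCSeq.etaIdx_eq_succ (hC : IsCSeq κ C) (hβ : β < κ) (h0 : 0 < α) (hαβ : α < β)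
    (h : η ∉ C β) : etaIdx C η α β = etaIdx C η α (Tr C α β 1) + 1 := by
  have hpos : 1 ≤ sInf {n | η ∈ C (Tr C α β n) ∨ n = rho2 C α β} := by
    refine Nat.one_le_iff_ne_zero.2 fun h0' => ?_
    rcases Nat.sInf_eq_zero.1 h0' with h' | h'
    · exact h'.elim h fun h' => by rw [hC.rho2_eq_succ hβ h0 hαβ] at h'; omega
    · exact h'.subset (Or.inr rfl)
  rw [etaIdx, etaIdx, ← Nat.sInf_add hpos]
  congr 3
  ext m
  rw [Set.mem_ofPred_eq, Set.mem_ofPred_eq, tr_succ, hC.rho2_eq_succ hβ h0 hαβ, Nat.add_right_cancel_iff]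

lemma IsCSeq.tr_one_eq_of_inter_eq (hC : IsCSeq κ C) (hx : x < κ) (h0 : 0 < δ) (hδx : δ < x)
    (hxβ : x < β) (hCx : C β ∩ Iio x = C x) : Tr C δ β 1 = Tr C δ x 1 := by
  obtain ⟨hyx, hyδ⟩ := hC.tr_one_mem hx h0 hδx
  have hyβ : Tr C δ x 1 ∈ C β := (hCx ▸ hyx : Tr C δ x 1 ∈ C β ∩ Iio x).1
  rw [tr_one_of_lt (hδx.trans hxβ), tr_one_of_lt hδx] at *
  have hzy : sInf (C β ∩ Ici δ) ≤ sInf (C x ∩ Ici δ) := csInf_le' ⟨hyβ, hyδ⟩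
  have hz : sInf (C β ∩ Ici δ) ∈ C β ∩ Ici δ := csInf_mem ⟨_, hyβ, hyδ⟩
  have hzx : sInf (C β ∩ Ici δ) ∈ C x :=
    hCx ▸ ⟨hz.1, hzy.trans_lt (hC.1 x hx hyx)⟩
  exact hzy.antisymm (csInf_le' ⟨hzx, hz.2⟩)

end Walks

section Patterns

variable {κ : Ordinal.{0}} {C : Ordinal.{0} → Set Ordinal.{0}} {Γ : Set Ordinal.{0}}
  {α β η δ x ζ : Ordinal.{0}}

def EtaPattern (C : Ordinal.{0} → Set Ordinal.{0}) (η δ β : Ordinal.{0}) : Prop :=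
  lamb C δ β = η ∧ rho2 C δ β = etaIdx C η δ β

lemma IsCSeq.etaPattern_of_mem (hC : IsCSeq κ C) (hβ : β < κ) (h0 : 0 < δ) (hδ : δ ∈ C β)
    (hη : η ∈ C β) (hsup : sSup (C β ∩ Iio δ) = η) : EtaPattern C η δ β := by
  have hδβ : δ < β := hC.1 β hβ hδ
  have hone : Tr C δ β 1 = δ := by
    rw [tr_one_of_lt hδβ]
    exact IsLeast.csInf_eq ⟨⟨hδ, mem_Ici.2 le_rfl⟩, fun _ h => h.2⟩
  constructor
  · rw [hC.lamb_eq_sup hβ h0 hδβ, hone, lamb, rho2_self, hsup, Finset.range_zero,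
      Finset.sup_empty, Ordinal.bot_eq_zero, max_eq_left zero_le]
  · rw [hC.rho2_eq_succ hβ h0 hδβ, hone, rho2_self, etaIdx_of_mem hη]

lemma IsCSeq.etaPattern_of_tr_one (hC : IsCSeq κ C) (hβ : β < κ) (h0 : 0 < δ) (hδβ : δ < β)
    (hη : η ∉ C β) (hsup : sSup (C β ∩ Iio δ) ≤ η) (h : EtaPattern C η δ (Tr C δ β 1)) :
    EtaPattern C η δ β := by
  rw [EtaPattern, hC.lamb_eq_sup hβ h0 hδβ, h.1, sup_eq_right.2 hsup,
    hC.rho2_eq_succ hβ h0 hδβ, h.2, hC.etaIdx_eq_succ hβ h0 hδβ hη]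
  exact ⟨rfl, rfl⟩

lemma IsCSeq.etaPattern_of_inter_eq (hC : IsCSeq κ C) (hβ : β < κ) (h0 : 0 < δ) (hηδ : η < δ)
    (hδx : δ < x) (hxβ : x < β) (hCx : C β ∩ Iio x = C x) (h : EtaPattern C η δ x) :
    EtaPattern C η δ β := by
  have hx := hxβ.trans hβ
  have hone := hC.tr_one_eq_of_inter_eq hx h0 hδx hxβ hCx
  have hδ : C β ∩ Iio δ = C x ∩ Iio δ := by
    rw [← hCx, inter_assoc, Iio_inter_Iio, min_eq_right hδx.le]
  have hmem : η ∈ C β ↔ η ∈ C x := by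
    rw [← hCx, mem_inter_iff, and_iff_left (mem_Iio.2 (hηδ.trans hδx))]
  have hlamb : lamb C δ β = lamb C δ x := by
    rw [hC.lamb_eq_sup hβ h0 (hδx.trans hxβ), hC.lamb_eq_sup hx h0 hδx, hδ, hone]
  have hrho : rho2 C δ β = rho2 C δ x := by
    rw [hC.rho2_eq_succ hβ h0 (hδx.trans hxβ), hC.rho2_eq_succ hx h0 hδx, hone]
  have heta : etaIdx C η δ β = etaIdx C η δ x := by
    by_cases hηx : η ∈ C x
    · rw [etaIdx_of_mem hηx, etaIdx_of_mem (hmem.2 hηx)]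
    · rw [hC.etaIdx_eq_succ hβ h0 (hδx.trans hxβ) (mt hmem.1 hηx),
        hC.etaIdx_eq_succ hx h0 hδx hηx, hone]
  rwa [EtaPattern, hlamb, hrho, heta]

/-- `λ*(α,β)`: `λ(α,β)` computed over the steps `ξ` of the walk with `α ∉ acc(C_ξ)` only;
unlike `λ(α,β)`, it is always below `α`. -/
def lambNacc (C : Ordinal.{0} → Set Ordinal.{0}) (α β : Ordinal.{0}) : Ordinal.{0} :=
  (Finset.range (rho2 C α β)).sup fun i =>
    if sSup (C (Tr C α β i) ∩ Iio α) < α then sSup (C (Tr C α β i) ∩ Iio α) else 0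

lemma lambNacc_lt (h0 : 0 < α) : lambNacc C α β < α :=
  (Finset.sup_lt_iff h0).2 fun i _ => by split_ifs with h; exacts [h, h0]

lemma IsCSeq.lambNacc_eq_sup (hC : IsCSeq κ C) (hβ : β < κ) (h0 : 0 < α) (hαβ : α < β) :
    lambNacc C α β = (if sSup (C β ∩ Iio α) < α then sSup (C β ∩ Iio α) else 0) ⊔
      lambNacc C α (Tr C α β 1) :=
  hC.finsetSup_range_rho2_eq hβ h0 hαβ fun ξ =>
    if sSup (C ξ ∩ Iio α) < α then sSup (C ξ ∩ Iio α) else 0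

/-- Walking down to `δ`, the walk from `β` follows the walk to `x` until it reaches `x`, or a
`ξ` with `x ∈ acc(C_ξ)` and hence `C_ξ ∩ x = C_x` by coherence; from there on it is the walk
from `x`. -/
lemma IsCSeq.etaPattern_of_lambNacc_lt (hC : IsCSeq κ C)
    (hcoh : ∀ α < κ, ∀ δ, IsAccOf (C α) δ → C α ∩ Iio δ = C δ)
    (h0 : 0 < δ) (hηδ : η < δ) (hδx : δ < x) (hx : EtaPattern C η δ x)
    (hxβ : x ≤ β) (hβ : β < κ) (hlt : lambNacc C x β < η) : EtaPattern C η δ β := by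
  induction β using WellFoundedLT.induction with
  | _ β ih =>
  rcases hxβ.eq_or_lt with rfl | hxβ
  · exact hx
  have h0x := h0.trans hδx
  rw [hC.lambNacc_eq_sup hβ h0x hxβ, max_lt_iff] at hlt
  by_cases hbdd : sSup (C β ∩ Iio x) < x
  · rw [if_pos hbdd] at hlt
    have hgap : ∀ t ∈ C β, t < x → t < η := fun t ht htx =>
      (le_sSup_inter_Iio ht htx).trans_lt hlt.1
    have hone : Tr C δ β 1 = Tr C x β 1 := by
      rw [tr_one_of_lt (hδx.trans hxβ), tr_one_of_lt hxβ]
      congr 1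
      ext t
      simp only [mem_inter_iff, mem_Ici]
      refine and_congr_right fun ht => ⟨fun hδt => not_lt.1 fun htx => ?_, hδx.le.trans⟩
      exact (hgap t ht htx).not_ge (hηδ.le.trans hδt)
    have hone_lt := hC.tr_one_lt hβ h0x hxβ
    refine hC.etaPattern_of_tr_one hβ h0 (hδx.trans hxβ)
      (fun hη => (hgap η hη (hηδ.trans hδx)).false) ?_ ?_
    · exact csSup_le' fun t ht => (hgap t ht.1 (ht.2.trans hδx)).le
    · rw [hone]
      exact ih _ hone_lt (hC.tr_one_mem hβ h0x hxβ).2 (hone_lt.trans hβ) hlt.2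
  · have hacc := hC.isAccOf_of_sSup_inter_Iio_eq hβ h0x hxβ
      ((sSup_inter_Iio_le _ _).antisymm (not_lt.1 hbdd))
    exact hC.etaPattern_of_inter_eq hβ h0 hηδ hδx hxβ (hcoh β hβ x hacc) hx

/-- `sup (nacc C_α ∩ Γ) = α`. -/
def NaccCofinal (C : Ordinal.{0} → Set Ordinal.{0}) (Γ : Set Ordinal.{0}) (α : Ordinal.{0}) :
    Prop :=
  ∀ γ < α, ∃ t ∈ C α, t ∈ Γ ∧ ¬ IsAccOf (C α) t ∧ γ < t

lemma IsCSeq.exists_etaPattern (hC : IsCSeq κ C) (hα : α < κ) (hΓ : NaccCofinal C Γ α)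
    (hζ : ζ < α) : ∃ δ ∈ Γ, ∃ η, ζ < η ∧ η < δ ∧ δ < α ∧ EtaPattern C η δ α := by
  obtain ⟨c, hcC, -, -, hζc⟩ := hΓ ζ hζ
  obtain ⟨δ, hδC, hδΓ, hnacc, hcδ⟩ := hΓ c (hC.1 α hα hcC)
  have hδα : δ < α := hC.1 α hα hδC
  have h0 : 0 < δ := zero_le.trans_lt hcδ
  have hcη : c ≤ sSup (C α ∩ Iio δ) := le_sSup_inter_Iio hcC hcδ
  have hηδ : sSup (C α ∩ Iio δ) < δ := (sSup_inter_Iio_le _ _).lt_of_ne fun h =>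
    hnacc (hC.isAccOf_of_sSup_inter_Iio_eq hα h0 hδα h)
  have hηC : sSup (C α ∩ Iio δ) ∈ C α := hC.sSup_mem hα inter_subset_left ⟨c, hcC, hcδ⟩
    ⟨δ, fun _ h => h.2.le⟩ (hηδ.trans hδα)
  exact ⟨δ, hδΓ, _, hζc.trans_le hcη, hηδ, hδα, hC.etaPattern_of_mem hα h0 hδC hηC rfl⟩

end Patterns

section Combinatorics

variable {κ ν σ : Cardinal.{0}}

lemma sSup_lt_ord_of_isRegular (hκ : κ.IsRegular) {A : Set Ordinal.{0}}
    (hA : ∀ a ∈ A, a < κ.ord) (hcard : #A < Cardinal.lift.{1} κ) : sSup A < κ.ord :=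
  Ordinal.sSup_lt_of_lt_cof (by rwa [← Ordinal.lift_cof, hκ.cof_ord]) hA

lemma mk_eq_of_otp_eq {b : Set Ordinal.{0}} (h : otp b = Ordinal.lift.{1} σ.ord) :
    #b = Cardinal.lift.{1} σ := by
  rw [← Ordinal.card_type (α := b) (· < ·), ← otp, h, ← Ordinal.lift_card, card_ord]

lemma mk_setOf_forall_lt_eq (hκ : ℵ₀ ≤ κ) {B : Set (Set Ordinal.{0})}
    (hB : B.PairwiseDisjoint id) (hBsize : #B = Cardinal.lift.{1} κ) {x : Ordinal.{0}}
    (hx : x < κ.ord) : #{b ∈ B | ∀ β ∈ b, x < β} = Cardinal.lift.{1} κ := by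
  set B' := {b ∈ B | ∀ β ∈ b, x < β}
  have hsub : B' ⊆ B := fun b hb => hb.1
  have hrest : #(B \ B' : Set (Set Ordinal.{0})) < Cardinal.lift.{1} κ := by
    have hlow : ∀ b : ↥(B \ B'), ∃ β ∈ (b : Set Ordinal.{0}), β ≤ x := fun b => by
      by_contra! h
      exact b.2.2 ⟨b.2.1, h⟩
    choose w hwb hwx using hlow
    have hinj : Function.Injective fun b => (⟨w b, hwx b⟩ : Iic x) := fun b b' h => by
      by_contra hne
      refine Set.disjoint_left.1 (hB b.2.1 b'.2.1 (Subtype.coe_ne_coe.2 hne)) (hwb b) ?_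
      have hw : w b = w b' := congrArg Subtype.val h
      exact hw ▸ hwb b'
    calc #(B \ B' : Set (Set Ordinal.{0})) ≤ #(Iic x) := mk_le_of_injective hinj
      _ = Cardinal.lift.{1} (Order.succ x).card := by rw [← Order.Iio_succ, Cardinal.mk_Iio_ordinal]
      _ < Cardinal.lift.{1} κ := Cardinal.lift_lt.2 (lt_ord.1 ((isSuccLimit_ord hκ).succ_lt hx))
  refine ((mk_le_mk_of_subset hsub).trans_eq hBsize).antisymm (not_lt.1 fun hlt => ?_)
  have hsum := mk_sdiff_add_mk hsub
  rw [hBsize] at hsum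
  exact (add_lt_of_lt (aleph0_le_lift.2 hκ) hrest hlt).ne hsum

lemma exists_strictMono_mem (hκ : κ.IsRegular) {S : Set Ordinal.{0}}
    (hS : ∀ γ < κ.ord, ∃ α ∈ S, γ < α ∧ α < κ.ord) :
    ∃ g : Ordinal.{0} → Ordinal.{0}, StrictMono g ∧ ∀ j < κ.ord, g j ∈ S ∧ g j < κ.ord := by
  set T := S ∩ Iio κ.ord ∪ Ici κ.ord
  have hT : ¬ BddAbove T := fun ⟨u, hu⟩ =>
    (Order.lt_succ (max u κ.ord)).not_ge <|
      (hu (Or.inr (mem_Ici.2 ((le_max_right _ _).trans (Order.le_succ _))))).trans (le_max_left _ _)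
  refine ⟨enumOrd T, enumOrd_strictMono hT, fun j hj => ?_⟩
  induction j using WellFoundedLT.induction with
  | _ j ih =>
  have hA : ∀ a ∈ enumOrd T '' Iio j, a < κ.ord := by
    rintro _ ⟨k, hk, rfl⟩
    exact (ih k hk (hk.trans hj)).2
  have hcard : #(enumOrd T '' Iio j) < Cardinal.lift.{1} κ :=
    mk_image_le.trans_lt (by rw [Cardinal.mk_Iio_ordinal, Cardinal.lift_lt]; exact lt_ord.1 hj)
  obtain ⟨a, haS, hlt, haκ⟩ := hS _ (sSup_lt_ord_of_isRegular hκ hA hcard)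
  have hle : enumOrd T j ≤ a := enumOrd_le_of_forall_lt (Or.inl ⟨haS, haκ⟩) fun k hk =>
    (le_csSup ⟨κ.ord, fun b hb => (hA b hb).le⟩ ⟨k, hk, rfl⟩).trans_lt hlt
  rcases enumOrd_mem hT j with h | h
  · exact h
  · exact absurd (hle.trans_lt haκ) (not_lt.2 h)

lemma exists_lt_forall_lt_of_mk_lt (hν : ν.IsRegular) {g : Ordinal.{0} → Ordinal.{0}}
    (hg : Monotone g) {b : Set Ordinal.{0}} (hb : #b < Cardinal.lift.{1} ν)
    {F : Ordinal.{0} → Ordinal.{0}} (hF : ∀ β ∈ b, ∃ j < ν.ord, F β < g j) :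
    ∃ j < ν.ord, ∀ β ∈ b, F β < g j := by
  choose! J hJν hJ using hF
  have hA : ∀ a ∈ J '' b, a < ν.ord := by
    rintro _ ⟨β, hβ, rfl⟩
    exact hJν β hβ
  refine ⟨sSup (J '' b), sSup_lt_ord_of_isRegular hν hA (mk_image_le.trans_lt hb),
    fun β hβ => (hJ β hβ).trans_le (hg ?_)⟩
  exact le_csSup ⟨ν.ord, fun a ha => (hA a ha).le⟩ ⟨β, hβ, rfl⟩

lemma exists_lift_le_mk_setOf (hκ : κ.IsRegular) (hνκ : ν < κ) {A : Set (Set Ordinal.{0})}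
    (hA : Cardinal.lift.{1} κ ≤ #A) {P : Set Ordinal.{0} → Ordinal.{0} → Prop}
    (hP : ∀ b ∈ A, ∃ j < ν.ord, P b j) :
    ∃ j < ν.ord, Cardinal.lift.{1} κ ≤ #{b ∈ A | P b j} := by
  choose! J hJν hJ using hP
  have hsmall : #(Iio ν.ord) < (Cardinal.lift.{1} κ).ord.cof := by
    rw [hκ.lift.cof_ord, Cardinal.mk_Iio_ordinal, card_ord, Cardinal.lift_lt]
    exact hνκ
  obtain ⟨⟨j, hj⟩, t, htA, ht, hJt⟩ := infinite_pigeonhole_set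
    (fun b : A => (⟨J b, hJν b b.2⟩ : Iio ν.ord)) _ hA (aleph0_le_lift.2 hκ.aleph0_le) hsmall
  refine ⟨j, hj, ht.trans (mk_le_mk_of_subset fun b hb => ⟨htA hb, ?_⟩)⟩
  have hJb : J b = j := congrArg Subtype.val (hJt hb)
  exact hJb ▸ hJ b (htA hb)


lemma exists_large_subfamily (hκ : κ.IsRegular) {S : Set Ordinal.{0}}
    (hS : ∀ γ < κ.ord, ∃ α ∈ S, γ < α ∧ α < κ.ord) (hν : ν.IsRegular) (hνκ : ν < κ)
    (hσν : σ < ν) {B : Set (Set Ordinal.{0})} (hB : IsFamily κ.ord σ.ord B)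
    (hBsize : #B = Cardinal.lift.{1} κ) (f : Ordinal.{0} → Ordinal.{0} → Ordinal.{0})
    (hf : ∀ x β, 0 < x → f x β < x) :
    ∃ ζ α x, ζ < α ∧ α ∈ S ∧ α < x ∧ x < κ.ord ∧
      #{b ∈ B | ∀ β ∈ b, x < β ∧ f x β < ζ} = Cardinal.lift.{1} κ := by
  obtain ⟨g, hg, hgS⟩ := exists_strictMono_mem hκ hS
  have hνlim := isSuccLimit_ord hν.aleph0_le
  have hA : ∀ a ∈ g '' Iio ν.ord, a < κ.ord := by
    rintro _ ⟨j, hj, rfl⟩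
    exact (hgS j (hj.trans (ord_lt_ord.2 hνκ))).2
  set x := sSup (g '' Iio ν.ord)
  have hxκ : x < κ.ord := sSup_lt_ord_of_isRegular hκ hA <| mk_image_le.trans_lt <| by
    rwa [Cardinal.mk_Iio_ordinal, card_ord, Cardinal.lift_lt]
  have hgx : ∀ j < ν.ord, g j < x := fun j hj => (hg (Order.lt_succ j)).trans_le <|
    le_csSup ⟨κ.ord, fun a ha => (hA a ha).le⟩ ⟨_, hνlim.succ_lt hj, rfl⟩
  have hx0 : 0 < x := zero_le.trans_lt (hgx 0 hνlim.bot_lt)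
  have hbound : ∀ b ∈ {b ∈ B | ∀ β ∈ b, x < β}, ∃ j < ν.ord, ∀ β ∈ b, x < β ∧ f x β < g j := by
    intro b hb
    have hbσ : #b < Cardinal.lift.{1} ν := by
      rw [mk_eq_of_otp_eq (hB.1 b hb.1).2, Cardinal.lift_lt]
      exact hσν
    obtain ⟨j, hj, hfj⟩ := exists_lt_forall_lt_of_mk_lt hν hg.monotone hbσ fun β _ => by
      obtain ⟨_, ⟨j, hj, rfl⟩, hlt⟩ := exists_lt_of_lt_csSup' (hf x β hx0)
      exact ⟨j, hj, hlt⟩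
    exact ⟨j, hj, fun β hβ => ⟨hb.2 β hβ, hfj β hβ⟩⟩
  obtain ⟨j, hj, hG⟩ := exists_lift_le_mk_setOf hκ hνκ
    (mk_setOf_forall_lt_eq hκ.aleph0_le hB.2 hBsize hxκ).ge hbound
  refine ⟨g j, g (Order.succ j), x, hg (Order.lt_succ j),
    (hgS _ ((hνlim.succ_lt hj).trans (ord_lt_ord.2 hνκ))).1, hgx _ (hνlim.succ_lt hj), hxκ,
    ((mk_le_mk_of_subset fun b hb => hb.1).trans_eq hBsize).antisymm ?_⟩
  exact hG.trans (mk_le_mk_of_subset fun b hb => ⟨hb.1.1, hb.2⟩)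

end Combinatorics

lemma clubIn_Ioo {κ γ : Ordinal.{0}} (hκ : Order.IsSuccLimit κ) (hγ : γ < κ) :
    ClubIn (Ioo γ κ) κ := by
  refine ⟨fun _ h => h.2, fun α hα => ?_, fun δ hδ h0 hlim => ?_⟩
  · refine ⟨Order.succ (max γ α), ⟨?_, hκ.succ_lt (max_lt hγ hα)⟩, ?_⟩
    · exact (le_max_left _ _).trans_lt (Order.lt_succ _)
    · exact (le_max_right _ _).trans (Order.le_succ _)
  · obtain ⟨t, ht, -, htδ⟩ := hlim 0 h0
    exact ⟨ht.1.trans htδ, hδ⟩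

lemma StatIn.exists_gt {κ γ : Ordinal.{0}} {Γ : Set Ordinal.{0}} (hΓ : StatIn Γ κ)
    (hκ : Order.IsSuccLimit κ) (hγ : γ < κ) : ∃ t ∈ Γ, γ < t := by
  obtain ⟨t, htΓ, htD⟩ := hΓ.2 _ (clubIn_Ioo hκ hγ)
  exact ⟨t, htΓ, htD.1⟩

lemma exists_naccCofinal_gt {κ : Ordinal.{0}} {C : Ordinal.{0} → Set Ordinal.{0}}
    {Γ : Set Ordinal.{0}} (hκ : Order.IsSuccLimit κ)
    (hhit : ∀ B : Set Ordinal, B ⊆ Iio κ → (∀ γ < κ, ∃ x ∈ B, γ < x) →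
      ∀ D : Set Ordinal, ClubIn D κ → ∃ α ∈ D, NaccCofinal C B α)
    (hΓ : StatIn Γ κ) : ∀ γ < κ, ∃ α ∈ {α | NaccCofinal C Γ α}, γ < α ∧ α < κ := by
  intro γ hγ
  obtain ⟨α, hαD, hα⟩ := hhit Γ hΓ.1 (fun _ h => hΓ.exists_gt hκ h) _ (clubIn_Ioo hκ hγ)
  exact ⟨α, hα, hαD⟩

theorem boxtimes_chi2_general (κ : Cardinal.{0}) (hreg : κ.IsRegular)
    (C : Ordinal.{0} → Set Ordinal.{0}) (hC : IsCSeq κ.ord C)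
    (hcoh : ∀ α < κ.ord, ∀ δ, IsAccOf (C α) δ → C α ∩ Set.Iio δ = C δ)
    (hhit : ∀ B : Set Ordinal, B ⊆ Set.Iio κ.ord → (∀ γ < κ.ord, ∃ x ∈ B, γ < x) →
      ∀ D : Set Ordinal, ClubIn D κ.ord → ∃ α ∈ D,
        ∀ γ < α, ∃ x ∈ C α, x ∈ B ∧ ¬ IsAccOf (C α) x ∧ γ < x)
    (Γ : Set Ordinal) (hΓ : StatIn Γ κ.ord)
    (σ : Cardinal.{0}) (hσ : ∃ ν : Cardinal, ν.IsRegular ∧ ν < κ ∧ σ < ν)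
    (B : Set (Set Ordinal)) (hB : IsFamily κ.ord σ.ord B)
    (hBsize : #B = Cardinal.lift.{1} κ) :
    ∃ δ ∈ Γ, ∃ η < δ,
      #{b ∈ B | ∀ β ∈ b, lamb C δ β = η ∧ rho2 C δ β = etaIdx C η δ β}
        = Cardinal.lift.{1} κ := by
  obtain ⟨ν, hν, hνκ, hσν⟩ := hσ
  obtain ⟨ζ, α, x, hζα, hα, hαx, hxκ, hG⟩ := exists_large_subfamily hreg
    (exists_naccCofinal_gt (isSuccLimit_ord hreg.aleph0_le) hhit hΓ) hν hνκ hσν hB hBsize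
    (lambNacc C) fun _ _ => lambNacc_lt
  obtain ⟨δ, hδΓ, η, hη, hηδ, hδα, hpatα⟩ := hC.exists_etaPattern (hαx.trans hxκ) hα
    (max_lt hζα (lambNacc_lt (β := x) (zero_le.trans_lt hζα)))
  have h0δ : 0 < δ := zero_le.trans_lt hηδ
  have hpatx : EtaPattern C η δ x := hC.etaPattern_of_lambNacc_lt hcoh h0δ hηδ hδα hpatα
    hαx.le hxκ ((le_max_right _ _).trans_lt hη)
  refine ⟨δ, hδΓ, η, hηδ, ((mk_le_mk_of_subset fun b hb => hb.1).trans_eq hBsize).antisymm ?_⟩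
  refine hG.ge.trans (mk_le_mk_of_subset fun b hb => ⟨hb.1, fun β hβ => ?_⟩)
  obtain ⟨hxβ, hβζ⟩ := hb.2 β hβ
  exact hC.etaPattern_of_lambNacc_lt hcoh h0δ hηδ (hδα.trans hαx) hpatx hxβ.le
    ((hB.1 b hb.1).1 hβ) (hβζ.trans ((le_max_left _ _).trans_lt hη))

/-- Along a `⊠⁻(κ)`-sequence: for every stationary `Γ`, every cardinal `σ` below
some regular cardinal `< κ`, and every pairwise disjoint `ℬ ⊆ [κ]^σ` of size `κ`,
there are `δ ∈ Γ` and `η < δ` such that κ-many `b ∈ ℬ` satisfy `λ(δ,β) = η` and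
`ρ₂(δ,β) = η_{δ,β}` for all `β ∈ b`. -/
theorem boxtimes_chi2 (κ : Cardinal.{0}) (hreg : κ.IsRegular) (hκ : ℵ₀ < κ)
    (C : Ordinal.{0} → Set Ordinal.{0}) (hC : IsCSeq κ.ord C)
    (hcoh : ∀ α < κ.ord, ∀ δ, IsAccOf (C α) δ → C α ∩ Set.Iio δ = C δ)
    (hhit : ∀ B : Set Ordinal, B ⊆ Set.Iio κ.ord → (∀ γ < κ.ord, ∃ x ∈ B, γ < x) →
      ∀ D : Set Ordinal, ClubIn D κ.ord → ∃ α ∈ D,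
        ∀ γ < α, ∃ x ∈ C α, x ∈ B ∧ ¬ IsAccOf (C α) x ∧ γ < x)
    (Γ : Set Ordinal) (hΓ : StatIn Γ κ.ord)
    (σ : Cardinal.{0}) (hσ : ∃ ν : Cardinal, ν.IsRegular ∧ ν < κ ∧ σ < ν)
    (B : Set (Set Ordinal)) (hB : IsFamily κ.ord σ.ord B)
    (hBsize : #B = Cardinal.lift.{1} κ) :
    ∃ δ ∈ Γ, ∃ η < δ,
      #{b ∈ B | ∀ β ∈ b, lamb C δ β = η ∧ rho2 C δ β = etaIdx C η δ β}
        = Cardinal.lift.{1} κ :=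
  boxtimes_chi2_general κ hreg C hC hcoh hhit Γ hΓ σ hσ B hB hBsize

end
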